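/- arXiv:quant-ph/0501045 — 2 statements merged into one kernel-verified Lean document; each statement's English description precedes it below -/
import Mathlib

section
/- Let ρ and σ be density matrices on ℂ^n, and let Λ be an n×n complex matrix satisfying 0 ≤ Λ ≤ 1 in the Loewner order (i.e. both Λ and 1−Λ are positive semidefinite). Then the traces tr(Λρ) and tr(Λσ) are real and satisfy tr(Λσ) ≥ tr(Λρ) − |ρ − σ|₁. -/
open Matrix ComplexOrder

/-- The trace norm `|M|₁ = tr √(Mᴴ M)` of a complex matrix. -/
noncomputable def traceNorm {n : Type*} [Fintype n] [DecidableEq n]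
    (M : Matrix n n ℂ) : ℝ :=
  (((Matrix.posSemidef_conjTranspose_mul_self M).1.eigenvectorUnitary : Matrix n n ℂ) *
      diagonal (((↑) : ℝ → ℂ) ∘ (√·) ∘ (Matrix.posSemidef_conjTranspose_mul_self M).1.eigenvalues) *
      (star (Matrix.posSemidef_conjTranspose_mul_self M).1.eigenvectorUnitary : Matrix n n ℂ)).trace.re

lemma psd_diag_nonneg {n : ℕ} {A : Matrix (Fin n) (Fin n) ℂ} (hA : A.PosSemidef) (i : Fin n) :
    0 ≤ A i i := by
  exact hA.diag_nonneg

open scoped MatrixOrder in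
lemma key_ineq {n : ℕ} (Δ Λ : Matrix (Fin n) (Fin n) ℂ) (hΔ : Δ.IsHermitian)
    (hΛ : Λ.PosSemidef) (hΛle : (1 - Λ).PosSemidef) :
    ((Λ * Δ).trace).re ≤ traceNorm Δ := by
  set U : Matrix (Fin n) (Fin n) ℂ := (hΔ.eigenvectorUnitary : Matrix (Fin n) (Fin n) ℂ) with hUdef
  set lam := hΔ.eigenvalues with hlamdef
  have hU2 : star U * U = 1 := (Matrix.mem_unitaryGroup_iff').mp hΔ.eigenvectorUnitary.2
  set D : Matrix (Fin n) (Fin n) ℂ := diagonal (RCLike.ofReal ∘ lam) with hDdef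
  have hspec : Δ = U * D * star U := hΔ.spectral_theorem
  set Dabs : Matrix (Fin n) (Fin n) ℂ := diagonal (fun i => ((|lam i| : ℝ) : ℂ)) with hDabsdef
  have hconj : ∀ A B : Matrix (Fin n) (Fin n) ℂ,
      (U * A * star U) * (U * B * star U) = U * (A * B) * star U := by
    intro A B
    have h : star U * (U * (B * star U)) = B * star U := by
      rw [← Matrix.mul_assoc, hU2, Matrix.one_mul]
    simp only [Matrix.mul_assoc, h]
  -- the square root of Δᴴ * Δ
  have hS_psd : PosSemidef (U * Dabs * star U) := by
    rw [Matrix.star_eq_conjTranspose]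
    exact (posSemidef_diagonal_iff.mpr fun i => by
      rw [Complex.zero_le_real]; exact abs_nonneg (lam i)).mul_mul_conjTranspose_same U
  have hDD : Dabs * Dabs = D * D := by
    rw [hDabsdef, hDdef, diagonal_mul_diagonal, diagonal_mul_diagonal]
    have h : (fun i => ((|lam i| : ℝ) : ℂ) * ((|lam i| : ℝ) : ℂ))
        = fun i => (RCLike.ofReal ∘ lam) i * (RCLike.ofReal ∘ lam) i := by
      funext i
      simp only [Function.comp_apply]
      rw [show (RCLike.ofReal (lam i) : ℂ) = ((lam i : ℝ) : ℂ) from rfl,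
        ← Complex.ofReal_mul, ← Complex.ofReal_mul, abs_mul_abs_self]
    rw [h]
  have hSq : (U * Dabs * star U) ^ 2 = Δᴴ * Δ := by
    rw [hΔ.eq, hspec, pow_two, hconj, hconj, hDD]
  have hsqrt : (((Matrix.posSemidef_conjTranspose_mul_self Δ).1.eigenvectorUnitary : Matrix (Fin n) (Fin n) ℂ) *
      diagonal (((↑) : ℝ → ℂ) ∘ (√·) ∘ (Matrix.posSemidef_conjTranspose_mul_self Δ).1.eigenvalues) *
      (star (Matrix.posSemidef_conjTranspose_mul_self Δ).1.eigenvectorUnitary : Matrix (Fin n) (Fin n) ℂ))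
      = U * Dabs * star U := by
    have h0 : (0 : Matrix (Fin n) (Fin n) ℂ) ≤ Δᴴ * Δ :=
      Matrix.nonneg_iff_posSemidef.mpr (Matrix.posSemidef_conjTranspose_mul_self Δ)
    have h1 : CFC.sqrt (Δᴴ * Δ) = U * Dabs * star U :=
      (CFC.sqrt_eq_iff _ _ h0 (Matrix.nonneg_iff_posSemidef.mpr hS_psd)).mpr (by rw [← pow_two]; exact hSq)
    rw [← h1, CFC.sqrt_eq_real_sqrt _ h0,
      cfcₙ_eq_cfc (f := Real.sqrt) (a := Δᴴ * Δ) Real.continuous_sqrt.continuousOn Real.sqrt_zero,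
      (Matrix.posSemidef_conjTranspose_mul_self Δ).1.cfc_eq]
    rfl
  have htn : traceNorm Δ = ∑ i, |lam i| := by
    rw [traceNorm, hsqrt, Matrix.trace_mul_comm, ← Matrix.mul_assoc, hU2, Matrix.one_mul,
      hDabsdef, trace_diagonal, Complex.re_sum]
    simp
  -- compute the trace of Λ * Δ
  set C : Matrix (Fin n) (Fin n) ℂ := star U * Λ * U with hCdef
  have hC : PosSemidef C := by
    rw [hCdef, Matrix.star_eq_conjTranspose]
    exact hΛ.conjTranspose_mul_mul_same U
  have hC' : PosSemidef (star U * (1 - Λ) * U) := by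
    rw [Matrix.star_eq_conjTranspose]
    exact hΛle.conjTranspose_mul_mul_same U
  have hCsum : ∀ i, C i i + (star U * (1 - Λ) * U) i i = 1 := by
    intro i
    have h : C + star U * (1 - Λ) * U = 1 := by
      rw [hCdef, Matrix.mul_sub, Matrix.mul_one, Matrix.sub_mul, ← hU2]
      abel
    have := congrArg (fun M => M i i) h
    simpa using this
  have hCre : ∀ i, 0 ≤ (C i i).re ∧ (C i i).re ≤ 1 ∧ (C i i).im = 0 := by
    intro i
    have h1 := psd_diag_nonneg hC i
    have h2 := psd_diag_nonneg hC' i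
    rw [Complex.le_def] at h1 h2
    have h3 := hCsum i
    have him : (C i i).im = 0 := by simp at h1; tauto
    refine ⟨by simpa using h1.1, ?_, him⟩
    have h4 : ((C i i) + (star U * (1 - Λ) * U) i i).re = 1 := by rw [h3]; simp
    simp only [Complex.add_re] at h4
    have h5 : (0:ℝ) ≤ ((star U * (1 - Λ) * U) i i).re := by simpa using h2.1
    linarith
  have htr : (Λ * Δ).trace = ∑ i, C i i * (lam i : ℂ) := by
    rw [hspec]
    calc (Λ * (U * D * star U)).trace
        = ((Λ * (U * D)) * star U).trace := by simp only [Matrix.mul_assoc]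
      _ = (star U * (Λ * (U * D))).trace := trace_mul_comm _ _
      _ = (C * D).trace := by rw [hCdef]; simp only [Matrix.mul_assoc]
      _ = ∑ i, C i i * (lam i : ℂ) := by
          simp [trace, diag, mul_diagonal, hDdef]
  rw [htr, htn, Complex.re_sum]
  apply Finset.sum_le_sum
  intro i _
  obtain ⟨h0, h1, him⟩ := hCre i
  have h6 : (C i i * (lam i : ℂ)).re = (C i i).re * lam i := by
    simp [Complex.mul_re, him]
  rw [h6]
  nlinarith [le_abs_self (lam i), neg_abs_le (lam i), abs_nonneg (lam i)]

/-- If `ρ, σ` are density matrices and `0 ≤ Λ ≤ 1` in the Loewner order, then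
`tr(Λρ)` and `tr(Λσ)` are real and `tr(Λσ) ≥ tr(Λρ) − |ρ − σ|₁`. -/
theorem trace_ge_trace_sub_traceNorm {n : ℕ}
    (ρ σ Λ : Matrix (Fin n) (Fin n) ℂ)
    (hρ : ρ.PosSemidef) (hρtr : ρ.trace = 1)
    (hσ : σ.PosSemidef) (hσtr : σ.trace = 1)
    (hΛ : Λ.PosSemidef) (hΛle : (1 - Λ).PosSemidef) :
    ((Λ * ρ).trace).im = 0 ∧ ((Λ * σ).trace).im = 0 ∧
      ((Λ * σ).trace).re ≥ ((Λ * ρ).trace).re - traceNorm (ρ - σ) := by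
  have him : ∀ (H : Matrix (Fin n) (Fin n) ℂ), H.IsHermitian → ((Λ * H).trace).im = 0 := by
    intro H hH
    have h : (starRingEnd ℂ) ((Λ * H).trace) = (Λ * H).trace := by
      calc (starRingEnd ℂ) ((Λ * H).trace) = ((Λ * H)ᴴ).trace := (trace_conjTranspose _).symm
        _ = (Hᴴ * Λᴴ).trace := by rw [conjTranspose_mul]
        _ = (H * Λ).trace := by rw [hH.eq, hΛ.1.eq]
        _ = (Λ * H).trace := trace_mul_comm _ _
    exact Complex.conj_eq_iff_im.mp h
  refine ⟨him ρ hρ.1, him σ hσ.1, ?_⟩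
  have hkey := key_ineq (ρ - σ) Λ (hρ.1.sub hσ.1) hΛ hΛle
  rw [Matrix.mul_sub, trace_sub, Complex.sub_re] at hkey
  linarith
end

section
/- (Triangle-like inequality for fidelity.) Let ρ₁, ρ₂, ρ₃ be density matrices on ℂ^n. Then F(ρ₁,ρ₃) ≥ 1 − 2√(1 − F(ρ₁,ρ₂)) − 2√(1 − F(ρ₂,ρ₃)). -/
open Matrix ComplexOrder

attribute [local instance] Classical.propDecidable

/-- The positive semidefinite square root of a positive semidefinite matrix
(the definition `Matrix.PosSemidef.sqrt` of the older Mathlib, since removed). -/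
noncomputable def Matrix.PosSemidef.sqrt {n : Type*} [Fintype n] [DecidableEq n]
    {𝕜 : Type*} [RCLike 𝕜] {A : Matrix n n 𝕜} (hA : A.PosSemidef) : Matrix n n 𝕜 :=
  hA.1.eigenvectorUnitary.1 * diagonal ((↑) ∘ (√·) ∘ hA.1.eigenvalues) *
    (star hA.1.eigenvectorUnitary : Matrix n n 𝕜)

/-- The fidelity `F(ρ,σ) = (tr √(√ρ σ √ρ))²` of two density matrices. -/
noncomputable def fidelity {n : Type*} [Fintype n] [DecidableEq n]
    (ρ σ : Matrix n n ℂ) : ℝ :=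
  if hρ : ρ.PosSemidef then
    if h : (hρ.sqrt * σ * hρ.sqrt).PosSemidef then ((h.sqrt.trace).re) ^ 2 else 0
  else 0

set_option linter.unusedSectionVars false
set_option maxHeartbeats 2000000

lemma Matrix.PosSemidef.sqrt_mul_self {n : Type*} [Fintype n] [DecidableEq n]
    {A : Matrix n n ℂ} (hA : A.PosSemidef) : hA.sqrt * hA.sqrt = A := by
  have hU : (star hA.1.eigenvectorUnitary : Matrix n n ℂ) * hA.1.eigenvectorUnitary.1 = 1 :=
    Unitary.coe_star_mul_self _
  have hD : diagonal (((↑) ∘ (√·) ∘ hA.1.eigenvalues : n → ℂ)) *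
      diagonal ((↑) ∘ (√·) ∘ hA.1.eigenvalues) = diagonal (RCLike.ofReal ∘ hA.1.eigenvalues) := by
    rw [diagonal_mul_diagonal]
    congr 1
    funext i
    simp only [Function.comp_apply]
    rw [← Complex.ofReal_mul, Real.mul_self_sqrt (hA.eigenvalues_nonneg i)]
    rfl
  conv_rhs => rw [hA.1.spectral_theorem, Unitary.conjStarAlgAut_apply]
  unfold Matrix.PosSemidef.sqrt
  calc _ = hA.1.eigenvectorUnitary.1 * diagonal (((↑) ∘ (√·) ∘ hA.1.eigenvalues : n → ℂ)) *
        ((star hA.1.eigenvectorUnitary : Matrix n n ℂ) * hA.1.eigenvectorUnitary.1) *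
        diagonal ((↑) ∘ (√·) ∘ hA.1.eigenvalues) *
        (star hA.1.eigenvectorUnitary : Matrix n n ℂ) := by simp only [Matrix.mul_assoc]; rfl
    _ = _ := by rw [hU, Matrix.mul_one, Matrix.mul_assoc _ (diagonal _) (diagonal _), hD]

lemma Matrix.PosSemidef.posSemidef_sqrt {n : Type*} [Fintype n] [DecidableEq n]
    {A : Matrix n n ℂ} (hA : A.PosSemidef) : hA.sqrt.PosSemidef := by
  have hd : (diagonal (((↑) ∘ (√·) ∘ hA.1.eigenvalues : n → ℂ))).PosSemidef :=
    Matrix.PosSemidef.diagonal fun i => by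
      simp only [Function.comp_apply, Pi.zero_apply]
      exact_mod_cast Real.sqrt_nonneg _
  have := hd.mul_mul_conjTranspose_same hA.1.eigenvectorUnitary.1
  unfold Matrix.PosSemidef.sqrt
  rw [Matrix.star_eq_conjTranspose]
  exact this

variable {m : Type*} [Fintype m] [DecidableEq m]

noncomputable def toE (X : Matrix m m ℂ) : EuclideanSpace ℂ (m × m) :=
  WithLp.toLp 2 (fun p : m × m => X p.1 p.2)

lemma toE_sub (X Y : Matrix m m ℂ) : toE (X - Y) = toE X - toE Y := rfl

lemma toE_apply (X : Matrix m m ℂ) (p : m × m) : toE X p = X p.1 p.2 := rfl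

lemma inner_toE (X Y : Matrix m m ℂ) : (inner ℂ (toE X) (toE Y) : ℂ) = (Xᴴ * Y).trace := by
  rw [PiLp.inner_apply]
  rw [Fintype.sum_prod_type]
  rw [Finset.sum_comm]
  simp only [Matrix.trace, Matrix.diag, Matrix.mul_apply, Matrix.conjTranspose_apply,
    RCLike.inner_apply, toE_apply]
  simp only [starRingEnd_apply]
  exact Finset.sum_congr rfl fun _ _ => Finset.sum_congr rfl fun _ _ => mul_comm _ _

lemma norm_toE_sq (X : Matrix m m ℂ) : ‖toE X‖ ^ 2 = (Xᴴ * X).trace.re := by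
  rw [← inner_self_eq_norm_sq (𝕜 := ℂ), inner_toE]
  rfl

lemma diag_re_nonneg {P : Matrix m m ℂ} (hP : P.PosSemidef) (i : m) : 0 ≤ (P i i).re := by
  have h := hP.diag_nonneg (i := i)
  rw [Complex.le_def] at h
  exact h.1

lemma trace_re_nonneg {P : Matrix m m ℂ} (hP : P.PosSemidef) : 0 ≤ P.trace.re := by
  rw [Matrix.trace, Complex.re_sum]
  exact Finset.sum_nonneg fun i _ => diag_re_nonneg hP i

lemma trace_mul_re_nonneg {P Q : Matrix m m ℂ} (hP : P.PosSemidef) (hQ : Q.PosSemidef) :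
    0 ≤ (P * Q).trace.re := by
  have h1 : P * Q = hP.sqrt * hP.sqrt * Q := by rw [hP.sqrt_mul_self]
  have h2 : (hP.sqrt * hP.sqrt * Q).trace = (hP.sqrt * Q * hP.sqrt).trace :=
    (Matrix.trace_mul_cycle hP.sqrt Q hP.sqrt).symm
  have h3 : (hP.sqrt * Q * hP.sqrt).PosSemidef := by
    have := hQ.mul_mul_conjTranspose_same hP.sqrt
    rwa [hP.posSemidef_sqrt.isHermitian.eq] at this
  rw [h1, h2]
  exact trace_re_nonneg h3

lemma psd_smul {P : Matrix m m ℂ} (hP : P.PosSemidef) {c : ℝ} (hc : 0 ≤ c) :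
    ((c : ℂ) • P).PosSemidef := by
  refine posSemidef_iff_dotProduct_mulVec.mpr ⟨?_, fun x => ?_⟩
  · unfold Matrix.IsHermitian
    rw [Matrix.conjTranspose_smul, hP.isHermitian.eq, Complex.star_def, Complex.conj_ofReal]
  · rw [Matrix.smul_mulVec, dotProduct_smul, smul_eq_mul]
    exact mul_nonneg (Complex.zero_le_real.mpr hc) (hP.dotProduct_mulVec_nonneg x)

lemma pd_smul_one {c : ℝ} (hc : 0 < c) : ((c : ℂ) • (1 : Matrix m m ℂ)).PosDef := by
  rw [Matrix.smul_one_eq_diagonal]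
  exact Matrix.PosDef.diagonal fun _ => Complex.zero_lt_real.mpr hc

lemma re_le_norm (z : ℂ) : z.re ≤ ‖z‖ := by
  simpa using Complex.re_le_norm z

lemma contraction_aux (X : Matrix m m ℂ) {ε : ℝ} (hε : 0 < ε) :
    (1 - (X * ((posSemidef_conjTranspose_mul_self X).sqrt + (ε : ℂ) • 1)⁻¹)ᴴ *
      (X * ((posSemidef_conjTranspose_mul_self X).sqrt + (ε : ℂ) • 1)⁻¹)).PosSemidef := by
  set S := (posSemidef_conjTranspose_mul_self X).sqrt with hSdef
  set T := S + (ε : ℂ) • 1 with hTdef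
  have hM := posSemidef_conjTranspose_mul_self X
  have hS : S.PosSemidef := hM.posSemidef_sqrt
  have hSS : S * S = Xᴴ * X := hM.sqrt_mul_self
  have hT : T.PosDef := Matrix.PosDef.posSemidef_add hS (pd_smul_one hε)
  haveI := hT.isUnit.invertible
  have hTinvH : T⁻¹.IsHermitian := hT.isHermitian.inv
  have hUU : (X * T⁻¹)ᴴ * (X * T⁻¹) = T⁻¹ * (S * S) * T⁻¹ := by
    rw [Matrix.conjTranspose_mul, hTinvH.eq, hSS]
    simp only [Matrix.mul_assoc]
  have hone : (1 : Matrix m m ℂ) = T⁻¹ * (T * T) * T⁻¹ := by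
    rw [← Matrix.mul_assoc, Matrix.inv_mul_of_invertible, Matrix.one_mul,
      Matrix.mul_inv_of_invertible]
  have hdiff : T * T - S * S = ((2 * ε : ℝ) : ℂ) • S + ((ε ^ 2 : ℝ) : ℂ) • 1 := by
    show (S + (ε : ℂ) • 1) * (S + (ε : ℂ) • 1) - S * S = _
    simp only [Matrix.add_mul, Matrix.mul_add, Matrix.smul_mul, Matrix.mul_smul,
      Matrix.one_mul, Matrix.mul_one, smul_smul]
    push_cast
    module
  have hpos : (((2 * ε : ℝ) : ℂ) • S + ((ε ^ 2 : ℝ) : ℂ) • 1).PosSemidef :=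
    (psd_smul hS (by positivity)).add (psd_smul Matrix.PosSemidef.one (by positivity))
  have key : 1 - (X * T⁻¹)ᴴ * (X * T⁻¹) = T⁻¹ * (T * T - S * S) * T⁻¹ := by
    rw [hUU, Matrix.mul_sub, Matrix.sub_mul]
    rw [← hone]
  rw [key, hdiff]
  have := hpos.mul_mul_conjTranspose_same T⁻¹
  rwa [hTinvH.eq] at this

lemma trace_re_le_sqrt_trace (X : Matrix m m ℂ) :
    X.trace.re ≤ (posSemidef_conjTranspose_mul_self X).sqrt.trace.re := by
  have hM := posSemidef_conjTranspose_mul_self X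
  set S := (posSemidef_conjTranspose_mul_self X).sqrt with hSdef
  have hS : S.PosSemidef := hM.posSemidef_sqrt
  have hSS : S * S = Xᴴ * X := hM.sqrt_mul_self
  have key : ∀ ε : ℝ, 0 < ε →
      X.trace.re ≤ S.trace.re + ε * (Fintype.card m : ℝ) := by
    intro ε hε
    set T := S + (ε : ℂ) • 1 with hTdef
    have hT : T.PosDef := Matrix.PosDef.posSemidef_add hS (pd_smul_one hε)
    haveI := hT.isUnit.invertible
    set U := X * T⁻¹ with hUdef
    have hcontr : (1 - Uᴴ * U).PosSemidef := contraction_aux X hε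
    have hXU : U * T = X := by rw [hUdef, Matrix.inv_mul_cancel_right_of_invertible]
    have htr : X.trace = (U * S).trace + (ε : ℂ) * U.trace := by
      rw [← hXU, hTdef, Matrix.mul_add, Matrix.mul_smul, Matrix.mul_one, Matrix.trace_add,
        Matrix.trace_smul, smul_eq_mul]
    set R := hS.sqrt with hRdef
    have hR : R.PosSemidef := hS.posSemidef_sqrt
    have hRR : R * R = S := hS.sqrt_mul_self
    have e1 : (U * S).trace = (inner ℂ (toE R) (toE (U * R)) : ℂ) := by
      rw [inner_toE, hR.isHermitian.eq]
      calc (U * S).trace = (S * U).trace := Matrix.trace_mul_comm U S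
        _ = (R * R * U).trace := by rw [hRR]
        _ = (R * U * R).trace := (Matrix.trace_mul_cycle R U R).symm
        _ = (R * (U * R)).trace := by rw [Matrix.mul_assoc]
    have b1 : (U * S).trace.re ≤ S.trace.re := by
      have h0 : (U * S).trace.re ≤ ‖toE R‖ * ‖toE (U * R)‖ := by
        rw [e1]
        exact le_trans (re_le_norm _) (norm_inner_le_norm _ _)
      have hnR : ‖toE R‖ = Real.sqrt (S.trace.re) := by
        have h := norm_toE_sq R
        rw [hR.isHermitian.eq, hRR] at h
        rw [← h, Real.sqrt_sq (norm_nonneg _)]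
      have hnUR : ‖toE (U * R)‖ ≤ Real.sqrt (S.trace.re) := by
        rw [Real.le_sqrt (norm_nonneg _) (trace_re_nonneg hS)]
        rw [norm_toE_sq]
        have heq : (U * R)ᴴ * (U * R) = R * (Uᴴ * U) * R := by
          rw [Matrix.conjTranspose_mul, hR.isHermitian.eq]
          simp only [Matrix.mul_assoc]
        have hdiffpsd : (R * (1 - Uᴴ * U) * R).PosSemidef := by
          have := hcontr.mul_mul_conjTranspose_same R
          rwa [hR.isHermitian.eq] at this
        have hsplit : S - R * (Uᴴ * U) * R = R * (1 - Uᴴ * U) * R := by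
          rw [Matrix.mul_sub, Matrix.sub_mul, Matrix.mul_one, hRR]
        have := trace_re_nonneg hdiffpsd
        rw [← hsplit, Matrix.trace_sub, Complex.sub_re] at this
        rw [heq]
        linarith
      calc (U * S).trace.re ≤ ‖toE R‖ * ‖toE (U * R)‖ := h0
        _ ≤ Real.sqrt (S.trace.re) * Real.sqrt (S.trace.re) := by
            rw [hnR]
            exact mul_le_mul_of_nonneg_left hnUR (Real.sqrt_nonneg _)
        _ = S.trace.re := Real.mul_self_sqrt (trace_re_nonneg hS)
    have b2 : U.trace.re ≤ (Fintype.card m : ℝ) := by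
      have hdiag : ∀ i, (U i i).re ≤ 1 := by
        intro i
        have h0 := diag_re_nonneg hcontr i
        have h1 : ((1 - Uᴴ * U) i i).re = 1 - ((Uᴴ * U) i i).re := by
          simp [Matrix.sub_apply, Matrix.one_apply, Complex.sub_re]
        have h2 : ((Uᴴ * U) i i).re = ∑ j, Complex.normSq (U j i) := by
          rw [Matrix.mul_apply, Complex.re_sum]
          refine Finset.sum_congr rfl fun j _ => ?_
          rw [Matrix.conjTranspose_apply, Complex.star_def, mul_comm, Complex.mul_conj]
          exact Complex.ofReal_re _
        have h3 : Complex.normSq (U i i) ≤ ∑ j, Complex.normSq (U j i) :=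
          Finset.single_le_sum (f := fun j => Complex.normSq (U j i))
            (fun j _ => Complex.normSq_nonneg _) (Finset.mem_univ i)
        have h4 : Complex.normSq (U i i) ≤ 1 := by
          rw [h1, h2] at h0; linarith
        have h5 := re_le_norm (U i i)
        have h6 : ‖U i i‖ ^ 2 = Complex.normSq (U i i) := by
          rw [Complex.sq_norm]
        nlinarith [norm_nonneg (U i i)]
      calc U.trace.re = ∑ i, (U i i).re := by rw [Matrix.trace, Complex.re_sum]; rfl
        _ ≤ ∑ _i : m, (1 : ℝ) := Finset.sum_le_sum fun i _ => hdiag i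
        _ = (Fintype.card m : ℝ) := by simp
    have hre : X.trace.re = (U * S).trace.re + ε * U.trace.re := by
      rw [htr]
      simp [Complex.add_re, Complex.mul_re, Complex.ofReal_re, Complex.ofReal_im]
    rw [hre]
    have := mul_le_mul_of_nonneg_left b2 hε.le
    linarith
  by_contra hcon
  push_neg at hcon
  set c := (Fintype.card m : ℝ) with hcdef
  have hc : 0 ≤ c := Nat.cast_nonneg _
  have hε : 0 < (X.trace.re - S.trace.re) / (c + 1) := by
    apply div_pos (by linarith) (by linarith)
  have hk := key _ hε
  have h1 : (0:ℝ) < c + 1 := by linarith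
  have h2 : (X.trace.re - S.trace.re) / (c + 1) * c < X.trace.re - S.trace.re := by
    rw [div_mul_eq_mul_div, div_lt_iff₀ h1]
    nlinarith
  linarith

lemma sqrt_trace_le (A B : Matrix m m ℂ) (hA : A.PosSemidef) (hB : B.PosSemidef)
    (hA1 : (A * A).trace.re = 1) (hB1 : (B * B).trace.re = 1) :
    (posSemidef_conjTranspose_mul_self (B * A)).sqrt.trace.re ≤
      Real.sqrt ((A * B).trace.re) := by
  set X := B * A with hXdef
  have hM := posSemidef_conjTranspose_mul_self X
  set S := (posSemidef_conjTranspose_mul_self X).sqrt with hSdef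
  have hS : S.PosSemidef := hM.posSemidef_sqrt
  have hSS : S * S = Xᴴ * X := hM.sqrt_mul_self
  set t := (A * B).trace.re with htdef
  have key : ∀ ε : ℝ, 0 < ε →
      S.trace.re ≤ Real.sqrt t + ε * (Fintype.card m : ℝ) := by
    intro ε hε
    set T := S + (ε : ℂ) • 1 with hTdef
    have hT : T.PosDef := Matrix.PosDef.posSemidef_add hS (pd_smul_one hε)
    haveI := hT.isUnit.invertible
    have hTinvH : T⁻¹.IsHermitian := hT.isHermitian.inv
    set U := X * T⁻¹ with hUdef
    have hcontr : (1 - Uᴴ * U).PosSemidef := contraction_aux X hε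
    -- Step 1 : S.trace.re ≤ (Uᴴ * X).trace.re + ε * card
    have hUX : Uᴴ * X = (S - (ε : ℂ) • 1) + ((ε ^ 2 : ℝ) : ℂ) • T⁻¹ := by
      have h1 : Uᴴ * X = T⁻¹ * (S * S) := by
        rw [hUdef, Matrix.conjTranspose_mul, hTinvH.eq, Matrix.mul_assoc, hSS]
      have hfact : S * S = T * (S - (ε : ℂ) • 1) + ((ε ^ 2 : ℝ) : ℂ) • 1 := by
        rw [hTdef]
        simp only [Matrix.add_mul, Matrix.mul_sub, Matrix.sub_mul, Matrix.smul_mul,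
          Matrix.mul_smul, Matrix.one_mul, Matrix.mul_one, smul_smul]
        push_cast
        module
      rw [h1, hfact, Matrix.mul_add, ← Matrix.mul_assoc, Matrix.inv_mul_of_invertible,
        Matrix.one_mul, Matrix.mul_smul, Matrix.mul_one]
    have step1 : S.trace.re ≤ (Uᴴ * X).trace.re + ε * (Fintype.card m : ℝ) := by
      have hTinvPsd : (T⁻¹).PosSemidef := hT.posSemidef.inv
      have htr : (Uᴴ * X).trace.re =
          S.trace.re - ε * (Fintype.card m : ℝ) + ε ^ 2 * (T⁻¹).trace.re := by
        rw [hUX, Matrix.trace_add, Matrix.trace_sub, Matrix.trace_smul, Matrix.trace_smul,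
          Matrix.trace_one]
        simp [Complex.add_re, Complex.sub_re, smul_eq_mul, Complex.mul_re,
          Complex.ofReal_re, Complex.ofReal_im, ← Complex.ofReal_pow]
      have := trace_re_nonneg hTinvPsd
      nlinarith [sq_nonneg ε]
    -- Step 2 : (Uᴴ * X).trace.re = (A * B * U).trace.re
    have step2 : (Uᴴ * X).trace.re = (A * B * U).trace.re := by
      have h2 : (A * B * U).trace = star ((Uᴴ * X).trace) := by
        rw [← Matrix.trace_conjTranspose]
        congr 1
        rw [Matrix.conjTranspose_mul, Matrix.conjTranspose_conjTranspose, hXdef,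
          Matrix.conjTranspose_mul, hA.isHermitian.eq, hB.isHermitian.eq]
      rw [h2, Complex.star_def, Complex.conj_re]
    -- Step 3 : (A * B * U).trace.re ≤ √t
    have step3 : (A * B * U).trace.re ≤ Real.sqrt t := by
      set Ra := hA.sqrt with hRadef
      have hRa : Ra.PosSemidef := hA.posSemidef_sqrt
      have hRaRa : Ra * Ra = A := hA.sqrt_mul_self
      set Rb := hB.sqrt with hRbdef
      have hRb : Rb.PosSemidef := hB.posSemidef_sqrt
      have hRbRb : Rb * Rb = B := hB.sqrt_mul_self
      have hZadj : (Ra * Uᴴ * Rb)ᴴ = Rb * (U * Ra) := by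
        simp only [Matrix.conjTranspose_mul, Matrix.conjTranspose_conjTranspose,
          hRa.isHermitian.eq, hRb.isHermitian.eq, Matrix.mul_assoc]
      have e : (A * B * U).trace = (inner ℂ (toE (Ra * Uᴴ * Rb)) (toE (Ra * Rb)) : ℂ) := by
        rw [inner_toE, hZadj]
        calc (A * B * U).trace
            = (Ra * (Ra * (Rb * (Rb * U)))).trace := by
              rw [← hRaRa, ← hRbRb]; simp only [Matrix.mul_assoc]
          _ = ((Ra * (Rb * (Rb * U))) * Ra).trace := Matrix.trace_mul_comm _ _
          _ = (Ra * (Rb * (Rb * (U * Ra)))).trace := by simp only [Matrix.mul_assoc]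
          _ = ((Rb * (Rb * (U * Ra))) * Ra).trace := Matrix.trace_mul_comm _ _
          _ = (Rb * (Rb * (U * (Ra * Ra)))).trace := by simp only [Matrix.mul_assoc]
          _ = ((Rb * (U * (Ra * Ra))) * Rb).trace := Matrix.trace_mul_comm _ _
          _ = (Rb * (U * Ra) * (Ra * Rb)).trace := by simp only [Matrix.mul_assoc]
      have hW : ‖toE (Ra * Rb)‖ = Real.sqrt t := by
        have h := norm_toE_sq (Ra * Rb)
        have h2 : ((Ra * Rb)ᴴ * (Ra * Rb)).trace = (A * B).trace := by
          rw [Matrix.conjTranspose_mul, hRa.isHermitian.eq, hRb.isHermitian.eq]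
          calc (Rb * Ra * (Ra * Rb)).trace
              = (Rb * (Ra * (Ra * Rb))).trace := by simp only [Matrix.mul_assoc]
            _ = ((Ra * (Ra * Rb)) * Rb).trace := Matrix.trace_mul_comm _ _
            _ = (A * B).trace := by
                rw [← hRaRa, ← hRbRb]; simp only [Matrix.mul_assoc]
        rw [h2] at h
        rw [← htdef] at h
        rw [← h, Real.sqrt_sq (norm_nonneg _)]
      have hZ : ‖toE (Ra * Uᴴ * Rb)‖ ≤ 1 := by
        set P := Uᴴ * U with hPdef
        have hP : P.PosSemidef := posSemidef_conjTranspose_mul_self U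
        have hUAU : (U * A * Uᴴ).PosSemidef := hA.mul_mul_conjTranspose_same U
        have hZsq : ‖toE (Ra * Uᴴ * Rb)‖ ^ 2 = (U * A * Uᴴ * B).trace.re := by
          rw [norm_toE_sq, hZadj]
          refine congrArg Complex.re ?_
          calc (Rb * (U * Ra) * (Ra * Uᴴ * Rb)).trace
              = (Rb * (U * (Ra * (Ra * (Uᴴ * Rb))))).trace := by
                simp only [Matrix.mul_assoc]
            _ = ((U * (Ra * (Ra * (Uᴴ * Rb)))) * Rb).trace := Matrix.trace_mul_comm _ _
            _ = (U * A * Uᴴ * B).trace := by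
                rw [← hRaRa, ← hRbRb]; simp only [Matrix.mul_assoc]
        have c2 : (U * A * Uᴴ * B).trace.re ≤ ‖toE (U * A * Uᴴ)‖ * ‖toE B‖ := by
          have hh : (U * A * Uᴴ * B).trace = (inner ℂ (toE (U * A * Uᴴ)) (toE B) : ℂ) := by
            rw [inner_toE, hUAU.isHermitian.eq]
          rw [hh]
          exact le_trans (re_le_norm _) (norm_inner_le_norm _ _)
        have hnB : ‖toE B‖ = 1 := by
          have h := norm_toE_sq B
          rw [hB.isHermitian.eq, hB1] at h
          nlinarith [norm_nonneg (toE B)]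
        have hnUAU : ‖toE (U * A * Uᴴ)‖ ≤ 1 := by
          have h := norm_toE_sq (U * A * Uᴴ)
          set Q := Ra * P * Ra with hQdef
          have hQ : Q.PosSemidef := by
            have := hP.mul_mul_conjTranspose_same Ra
            rwa [hRa.isHermitian.eq] at this
          have hAQ : (A - Q).PosSemidef := by
            have hps := hcontr.mul_mul_conjTranspose_same Ra
            rw [hRa.isHermitian.eq] at hps
            have heq : Ra * (1 - Uᴴ * U) * Ra = A - Q := by
              rw [Matrix.mul_sub, Matrix.mul_one, Matrix.sub_mul, hRaRa, hQdef, hPdef]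
            rwa [heq] at hps
          have htrQ : ((U * A * Uᴴ)ᴴ * (U * A * Uᴴ)).trace = (Q * Q).trace := by
            rw [hUAU.isHermitian.eq]
            calc (U * A * Uᴴ * (U * A * Uᴴ)).trace
                = (U * (Ra * (Ra * (Uᴴ * (U * (Ra * (Ra * Uᴴ))))))).trace := by
                  rw [← hRaRa]; simp only [Matrix.mul_assoc]
              _ = ((Ra * (Ra * (Uᴴ * (U * (Ra * (Ra * Uᴴ)))))) * U).trace :=
                  Matrix.trace_mul_comm _ _
              _ = (Ra * (Ra * (Uᴴ * (U * (Ra * (Ra * (Uᴴ * U))))))).trace := by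
                  simp only [Matrix.mul_assoc]
              _ = ((Ra * (Uᴴ * (U * (Ra * (Ra * (Uᴴ * U)))))) * Ra).trace :=
                  Matrix.trace_mul_comm _ _
              _ = (Q * Q).trace := by
                  rw [hQdef, hPdef]; simp only [Matrix.mul_assoc]
          have n1 : (Q * Q).trace.re ≤ (Q * A).trace.re := by
            have h0 := trace_mul_re_nonneg hQ hAQ
            rw [Matrix.mul_sub, Matrix.trace_sub, Complex.sub_re] at h0
            linarith
          have n2 : (Q * A).trace.re ≤ 1 := by
            have h0 := trace_mul_re_nonneg hAQ hA
            rw [Matrix.sub_mul, Matrix.trace_sub, Complex.sub_re] at h0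
            linarith [hA1]
          rw [htrQ] at h
          nlinarith [norm_nonneg (toE (U * A * Uᴴ))]
        have hZsq' : ‖toE (Ra * Uᴴ * Rb)‖ ^ 2 ≤ 1 := by
          rw [hZsq]
          calc (U * A * Uᴴ * B).trace.re ≤ ‖toE (U * A * Uᴴ)‖ * ‖toE B‖ := c2
            _ ≤ 1 := by rw [hnB, mul_one]; exact hnUAU
        nlinarith [norm_nonneg (toE (Ra * Uᴴ * Rb))]
      calc (A * B * U).trace.re
          ≤ ‖toE (Ra * Uᴴ * Rb)‖ * ‖toE (Ra * Rb)‖ := by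
            rw [e]; exact le_trans (re_le_norm _) (norm_inner_le_norm _ _)
        _ ≤ 1 * Real.sqrt t := by
            rw [hW]; exact mul_le_mul_of_nonneg_right hZ (Real.sqrt_nonneg _)
        _ = Real.sqrt t := one_mul _
    calc S.trace.re ≤ (Uᴴ * X).trace.re + ε * (Fintype.card m : ℝ) := step1
      _ = (A * B * U).trace.re + ε * (Fintype.card m : ℝ) := by rw [step2]
      _ ≤ Real.sqrt t + ε * (Fintype.card m : ℝ) := by linarith [step3]
  by_contra hcon
  push_neg at hcon
  set c := (Fintype.card m : ℝ) with hcdef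
  have hc : 0 ≤ c := Nat.cast_nonneg _
  have hε : 0 < (S.trace.re - Real.sqrt t) / (c + 1) := by
    apply div_pos (by linarith) (by linarith)
  have hk := key _ hε
  have h1 : (0:ℝ) < c + 1 := by linarith
  have h2 : (S.trace.re - Real.sqrt t) / (c + 1) * c < S.trace.re - Real.sqrt t := by
    rw [div_mul_eq_mul_div, div_lt_iff₀ h1]
    nlinarith
  linarith

lemma sqrt_congr {M N : Matrix m m ℂ} (h : M = N) (hM : M.PosSemidef) (hN : N.PosSemidef) :
    hM.sqrt = hN.sqrt := by subst h; rfl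

lemma Mfid_psd {ρ σ : Matrix m m ℂ} (hρ : ρ.PosSemidef) (hσ : σ.PosSemidef) :
    (hρ.sqrt * σ * hρ.sqrt).PosSemidef := by
  have := hσ.mul_mul_conjTranspose_same hρ.sqrt
  rwa [hρ.posSemidef_sqrt.isHermitian.eq] at this

lemma fidelity_eq {ρ σ : Matrix m m ℂ} (hρ : ρ.PosSemidef) (hσ : σ.PosSemidef) :
    fidelity ρ σ = ((Mfid_psd hρ hσ).sqrt.trace.re) ^ 2 := by
  rw [fidelity, dif_pos hρ, dif_pos (Mfid_psd hρ hσ)]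

lemma fid_decomp {ρ σ : Matrix m m ℂ} (hρ : ρ.PosSemidef) (hσ : σ.PosSemidef) :
    hρ.sqrt * σ * hρ.sqrt = (hσ.sqrt * hρ.sqrt)ᴴ * (hσ.sqrt * hρ.sqrt) := by
  rw [Matrix.conjTranspose_mul, hρ.posSemidef_sqrt.isHermitian.eq,
    hσ.posSemidef_sqrt.isHermitian.eq]
  have h : hσ.sqrt * hσ.sqrt = σ := hσ.sqrt_mul_self
  calc hρ.sqrt * σ * hρ.sqrt = hρ.sqrt * (hσ.sqrt * hσ.sqrt) * hρ.sqrt := by rw [h]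
    _ = hρ.sqrt * hσ.sqrt * (hσ.sqrt * hρ.sqrt) := by simp only [Matrix.mul_assoc]

lemma fidelity_eq' {ρ σ : Matrix m m ℂ} (hρ : ρ.PosSemidef) (hσ : σ.PosSemidef) :
    fidelity ρ σ =
      ((posSemidef_conjTranspose_mul_self (hσ.sqrt * hρ.sqrt)).sqrt.trace.re) ^ 2 := by
  rw [fidelity_eq hρ hσ, sqrt_congr (fid_decomp hρ hσ) (Mfid_psd hρ hσ)
    (posSemidef_conjTranspose_mul_self _)]


/-- Triangle-like inequality for the fidelity:
`F(ρ₁,ρ₃) ≥ 1 − 2√(1 − F(ρ₁,ρ₂)) − 2√(1 − F(ρ₂,ρ₃))`. -/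
theorem fidelity_triangle_like {n : ℕ}
    (ρ₁ ρ₂ ρ₃ : Matrix (Fin n) (Fin n) ℂ)
    (h₁ : ρ₁.PosSemidef) (h₁tr : ρ₁.trace = 1)
    (h₂ : ρ₂.PosSemidef) (h₂tr : ρ₂.trace = 1)
    (h₃ : ρ₃.PosSemidef) (h₃tr : ρ₃.trace = 1) :
    fidelity ρ₁ ρ₃ ≥
      1 - 2 * Real.sqrt (1 - fidelity ρ₁ ρ₂) - 2 * Real.sqrt (1 - fidelity ρ₂ ρ₃) := by
  set A := h₁.sqrt with hAdef
  set B := h₂.sqrt with hBdef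
  set C := h₃.sqrt with hCdef
  have hA : A.PosSemidef := h₁.posSemidef_sqrt
  have hB : B.PosSemidef := h₂.posSemidef_sqrt
  have hC : C.PosSemidef := h₃.posSemidef_sqrt
  have hA1 : (A * A).trace.re = 1 := by rw [h₁.sqrt_mul_self, h₁tr]; rfl
  have hB1 : (B * B).trace.re = 1 := by rw [h₂.sqrt_mul_self, h₂tr]; rfl
  have hC1 : (C * C).trace.re = 1 := by rw [h₃.sqrt_mul_self, h₃tr]; rfl
  set tAB := (A * B).trace.re with htAB
  set tBC := (B * C).trace.re with htBC
  set tAC := (A * C).trace.re with htAC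
  have htABnn : 0 ≤ tAB := trace_mul_re_nonneg hA hB
  have htBCnn : 0 ≤ tBC := trace_mul_re_nonneg hB hC
  have htACnn : 0 ≤ tAC := trace_mul_re_nonneg hA hC
  -- fidelity upper bounds
  have hF12 : fidelity ρ₁ ρ₂ ≤ tAB := by
    rw [fidelity_eq' h₁ h₂]
    have hle := sqrt_trace_le A B hA hB hA1 hB1
    have hnn := trace_re_nonneg
      (posSemidef_conjTranspose_mul_self (B * A)).posSemidef_sqrt
    calc ((posSemidef_conjTranspose_mul_self (B * A)).sqrt.trace.re) ^ 2
        ≤ (Real.sqrt tAB) ^ 2 := by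
          apply pow_le_pow_left₀ hnn hle
      _ = tAB := Real.sq_sqrt htABnn
  have hF23 : fidelity ρ₂ ρ₃ ≤ tBC := by
    rw [fidelity_eq' h₂ h₃]
    have hle := sqrt_trace_le B C hB hC hB1 hC1
    have hnn := trace_re_nonneg
      (posSemidef_conjTranspose_mul_self (C * B)).posSemidef_sqrt
    calc ((posSemidef_conjTranspose_mul_self (C * B)).sqrt.trace.re) ^ 2
        ≤ (Real.sqrt tBC) ^ 2 := by
          apply pow_le_pow_left₀ hnn hle
      _ = tBC := Real.sq_sqrt htBCnn
  -- fidelity lower bound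
  have hF13 : tAC ^ 2 ≤ fidelity ρ₁ ρ₃ := by
    rw [fidelity_eq' h₁ h₃]
    have hle := trace_re_le_sqrt_trace (C * A)
    have : (C * A).trace.re = tAC := by rw [htAC, Matrix.trace_mul_comm]
    rw [this] at hle
    exact pow_le_pow_left₀ htACnn hle 2
  -- Euclidean geometry
  set x := ‖toE A - toE B‖ with hxdef
  set y := ‖toE B - toE C‖ with hydef
  set z := ‖toE A - toE C‖ with hzdef
  have hsub : ∀ (P Q : Matrix (Fin n) (Fin n) ℂ), P.PosSemidef → Q.PosSemidef →
      (P * P).trace.re = 1 → (Q * Q).trace.re = 1 →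
      ‖toE P - toE Q‖ ^ 2 = 2 - 2 * (P * Q).trace.re := by
    intro P Q hP hQ hP1 hQ1
    rw [← toE_sub, norm_toE_sq]
    have hadj : (P - Q)ᴴ = P - Q := by
      rw [Matrix.conjTranspose_sub, hP.isHermitian.eq, hQ.isHermitian.eq]
    rw [hadj, Matrix.sub_mul, Matrix.mul_sub, Matrix.mul_sub, Matrix.trace_sub,
      Matrix.trace_sub, Matrix.trace_sub, Complex.sub_re, Complex.sub_re, Complex.sub_re]
    have hcomm : (Q * P).trace.re = (P * Q).trace.re := by rw [Matrix.trace_mul_comm]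
    rw [hP1, hQ1, hcomm]  -- careful: these are re equalities, need them as rewrites on re
    ring
  have hx2 : x ^ 2 = 2 - 2 * tAB := hsub A B hA hB hA1 hB1
  have hy2 : y ^ 2 = 2 - 2 * tBC := hsub B C hB hC hB1 hC1
  have hz2 : z ^ 2 = 2 - 2 * tAC := hsub A C hA hC hA1 hC1
  have hxnn : 0 ≤ x := norm_nonneg _
  have hynn : 0 ≤ y := norm_nonneg _
  have hznn : 0 ≤ z := norm_nonneg _
  have htri : z ≤ x + y := by
    rw [hzdef, hxdef, hydef]
    exact norm_sub_le_norm_sub_add_norm_sub _ _ _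
  have htAB1 : tAB ≤ 1 := by nlinarith [sq_nonneg x]
  have htBC1 : tBC ≤ 1 := by nlinarith [sq_nonneg y]
  clear_value A B C x y z tAB tBC tAC
  -- sqrt bounds
  set s2 := Real.sqrt 2 with hs2def
  have hs2 : s2 ^ 2 = 2 := Real.sq_sqrt (by norm_num)
  have hs2pos : 0 < s2 := Real.sqrt_pos.mpr (by norm_num)
  have hsq12 : x / s2 ≤ Real.sqrt (1 - fidelity ρ₁ ρ₂) := by
    have h1 : (x / s2) ^ 2 = 1 - tAB := by
      rw [div_pow, hs2, hx2]; ring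
    have h2 : Real.sqrt (1 - tAB) ≤ Real.sqrt (1 - fidelity ρ₁ ρ₂) :=
      Real.sqrt_le_sqrt (by linarith)
    have h3 : Real.sqrt (1 - tAB) = x / s2 := by
      rw [← h1, Real.sqrt_sq (div_nonneg hxnn hs2pos.le)]
    linarith
  have hsq23 : y / s2 ≤ Real.sqrt (1 - fidelity ρ₂ ρ₃) := by
    have h1 : (y / s2) ^ 2 = 1 - tBC := by
      rw [div_pow, hs2, hy2]; ring
    have h2 : Real.sqrt (1 - tBC) ≤ Real.sqrt (1 - fidelity ρ₂ ρ₃) :=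
      Real.sqrt_le_sqrt (by linarith)
    have h3 : Real.sqrt (1 - tBC) = y / s2 := by
      rw [← h1, Real.sqrt_sq (div_nonneg hynn hs2pos.le)]
    linarith
  -- final arithmetic
  have hzs2 : z ≤ s2 := by nlinarith
  have key : (1 - z ^ 2 / 2) ^ 2 ≥ 1 - s2 * z := by nlinarith
  have htACz : tAC = 1 - z ^ 2 / 2 := by linarith
  have hne : s2 ≠ 0 := hs2pos.ne'
  have hx' : 2 * (x / s2) = s2 * x := by
    rw [mul_div_assoc', eq_comm, eq_div_iff hne]
    linear_combination x * hs2
  have hy' : 2 * (y / s2) = s2 * y := by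
    rw [mul_div_assoc', eq_comm, eq_div_iff hne]
    linear_combination y * hs2
  have hmulz : s2 * z ≤ s2 * (x + y) := mul_le_mul_of_nonneg_left htri hs2pos.le
  have hrhs : 1 - 2 * Real.sqrt (1 - fidelity ρ₁ ρ₂) - 2 * Real.sqrt (1 - fidelity ρ₂ ρ₃)
      ≤ 1 - s2 * z := by
    have hma := mul_add s2 x y
    linarith
  calc fidelity ρ₁ ρ₃ ≥ tAC ^ 2 := hF13
    _ = (1 - z ^ 2 / 2) ^ 2 := by rw [htACz]
    _ ≥ 1 - s2 * z := key
    _ ≥ _ := hrhs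
end
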